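/- Consider SGD with non-uniform batch sizes and learning-rate normalization: iterates y_{q+1} = y_q − η_q g_q^{(b_q)} for q = 1,…,Q, with per-step learning rate η_q = η_ℓ · b_q / B, and let A_Q = Σ_{q=1}^Q η_q = (η_ℓ/B) Σ_{q=1}^Q b_q. If 0 < η_ℓ ≤ 1 / (L(M/B + 1)), then (1/A_Q) Σ_{q=1}^Q η_q E[‖∇F(y_q)‖²] ≤ 2(F(y_1) − F*)/A_Q + η_ℓ L σ_ℓ² / B. -/

import Mathlib

/-!
For an `L`-smooth `F` the descent lemma bounds one step by
`F(y - η g) ≤ F y - η ⟪∇F y, g⟫ + L η² ‖g‖² / 2`. Conditioning on `y`, unbiasedness turns the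
cross term into `‖∇F y‖²` and splits the second moment `E‖g‖²` into variance plus `E‖∇F y‖²`;
the weak-growth bound together with `L η_q (1 + M / b_q) ≤ 1` then leaves half of the decrease
`η_q E‖∇F(y_q)‖²`. The normalization `η_q = η_ℓ b_q / B` makes the remaining noise
`L η_q² σ_ℓ² / b_q` equal to `η_q · η_ℓ L σ_ℓ² / B`, proportional to the weight `η_q`, so summing
over `q` telescopes the function values into `F y₁ - F*` and the noise into `A_Q η_ℓ L σ_ℓ² / B`.
-/

open MeasureTheory Filter InnerProductSpace
open scoped NNReal

section Descent

variable {E : Type*} [NormedAddCommGroup E] [InnerProductSpace ℝ E] [CompleteSpace E]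

theorem apply_add_le_of_lipschitzWith_gradient {F : E → ℝ} {K : ℝ≥0}
    (hF : Differentiable ℝ F) (hK : LipschitzWith K (gradient F)) (x h : E) :
    F (x + h) ≤ F x + ⟪gradient F x, h⟫_ℝ + K / 2 * ‖h‖ ^ 2 := by
  have hderiv : ∀ t : ℝ,
      HasDerivAt (fun t : ℝ => F (x + t • h)) ⟪gradient F (x + t • h), h⟫_ℝ t := by
    intro t
    have hline : HasDerivAt (fun t : ℝ => x + t • h) h t := by
      simpa using ((hasDerivAt_id t).smul_const h).const_add x
    simpa [HasGradientAt, toDual_apply_apply, Function.comp_def] using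
      (hF _).hasGradientAt.hasFDerivAt.comp_hasDerivAt t hline
  have hmajorant : ∀ t : ℝ,
      HasDerivAt (fun t : ℝ => F x + t * ⟪gradient F x, h⟫_ℝ + K / 2 * ‖h‖ ^ 2 * t ^ 2)
        (⟪gradient F x, h⟫_ℝ + K * t * ‖h‖ ^ 2) t := by
    intro t
    have hlin : HasDerivAt (fun t : ℝ => t * ⟪gradient F x, h⟫_ℝ) ⟪gradient F x, h⟫_ℝ t := by
      simpa using (hasDerivAt_id t).mul_const ⟪gradient F x, h⟫_ℝ
    have hquad :
        HasDerivAt (fun t : ℝ => K / 2 * ‖h‖ ^ 2 * t ^ 2) (K / 2 * ‖h‖ ^ 2 * (2 * t)) t := by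
      simpa using (hasDerivAt_pow 2 t).const_mul (K / 2 * ‖h‖ ^ 2)
    exact ((hlin.const_add (F x)).add hquad).congr_deriv (by ring)
  have hderiv_le : ∀ t : ℝ, 0 ≤ t →
      ⟪gradient F (x + t • h), h⟫_ℝ ≤ ⟪gradient F x, h⟫_ℝ + K * t * ‖h‖ ^ 2 := by
    intro t ht
    calc ⟪gradient F (x + t • h), h⟫_ℝ
        = ⟪gradient F x, h⟫_ℝ + ⟪gradient F (x + t • h) - gradient F x, h⟫_ℝ := by
          rw [inner_sub_left]; ring
      _ ≤ ⟪gradient F x, h⟫_ℝ + K * ‖(x + t • h) - x‖ * ‖h‖ := by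
          gcongr
          exact (real_inner_le_norm _ _).trans
            (mul_le_mul_of_nonneg_right (hK.norm_sub_le _ _) (norm_nonneg _))
      _ = ⟪gradient F x, h⟫_ℝ + K * t * ‖h‖ ^ 2 := by
          rw [add_sub_cancel_left, norm_smul, Real.norm_of_nonneg ht]; ring
  have := image_le_of_deriv_right_le_deriv_boundary (a := 0) (b := 1)
    (fun t _ => (hderiv t).continuousAt.continuousWithinAt)
    (fun t _ => (hderiv t).hasDerivWithinAt) (by simp)
    (fun t _ => (hmajorant t).continuousAt.continuousWithinAt)
    (fun t _ => (hmajorant t).hasDerivWithinAt) (fun t ht => hderiv_le t ht.1)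
    (Set.right_mem_Icc.2 zero_le_one)
  simpa using this

end Descent

section ConditionalExpectation

variable {Ω E : Type*} {m m₀ : MeasurableSpace Ω} {μ : Measure Ω}
  [NormedAddCommGroup E] [InnerProductSpace ℝ E]

theorem MeasureTheory.MemLp.integrable_inner {f g : Ω → E} (hf : MemLp f 2 μ)
    (hg : MemLp g 2 μ) :
    Integrable (fun ω => ⟪f ω, g ω⟫_ℝ) μ :=
  memLp_one_iff_integrable.1 ((innerSL ℝ).memLp_of_bilin 1 hf hg)

variable [CompleteSpace E]

theorem integral_le_integral_of_condExp_le (hm : m ≤ m₀) [SigmaFinite (μ.trim hm)]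
    {f g : Ω → ℝ} (hg : Integrable g μ) (hfg : μ[f | m] ≤ᵐ[μ] g) :
    ∫ ω, f ω ∂μ ≤ ∫ ω, g ω ∂μ := by
  rw [← integral_condExp hm]
  exact integral_mono_ae integrable_condExp hg hfg

theorem integral_inner_eq_integral_norm_sq_of_condExp_eq (hm : m ≤ m₀) [SigmaFinite (μ.trim hm)]
    {f g : Ω → E} (hf : AEStronglyMeasurable[m] f μ)
    (hfg : Integrable (fun ω => ⟪f ω, g ω⟫_ℝ) μ) (hg : Integrable g μ) (hgf : μ[g | m] =ᵐ[μ] f) :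
    ∫ ω, ⟪f ω, g ω⟫_ℝ ∂μ = ∫ ω, ‖f ω‖ ^ 2 ∂μ := by
  rw [← integral_condExp hm]
  refine integral_congr_ae ?_
  filter_upwards [condExp_bilin_of_aestronglyMeasurable_left (innerSL ℝ) hf hfg hg, hgf]
    with ω hpull hω
  rw [hω] at hpull
  exact hpull.trans (real_inner_self_eq_norm_sq _)

theorem integral_norm_sq_eq_add_of_condExp_eq (hm : m ≤ m₀) [SigmaFinite (μ.trim hm)]
    {f g : Ω → E} (hf : AEStronglyMeasurable[m] f μ) (hf2 : MemLp f 2 μ) (hg2 : MemLp g 2 μ)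
    (hg : Integrable g μ) (hgf : μ[g | m] =ᵐ[μ] f) :
    ∫ ω, ‖g ω‖ ^ 2 ∂μ = ∫ ω, ‖g ω - f ω‖ ^ 2 ∂μ + ∫ ω, ‖f ω‖ ^ 2 ∂μ := by
  have hsq : ∀ {u : Ω → E}, MemLp u 2 μ → Integrable (fun ω => ‖u ω‖ ^ 2) μ :=
    fun hu => (memLp_two_iff_integrable_sq_norm hu.1).1 hu
  have hfg := hf2.integrable_inner hg2
  have hvar : Integrable (fun ω => ‖g ω - f ω‖ ^ 2) μ := hsq (hg2.sub hf2)
  have hcross := integral_inner_eq_integral_norm_sq_of_condExp_eq hm hf hfg hg hgf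
  calc ∫ ω, ‖g ω‖ ^ 2 ∂μ
      = ∫ ω, (‖g ω - f ω‖ ^ 2 + 2 * ⟪f ω, g ω⟫_ℝ - ‖f ω‖ ^ 2) ∂μ := by
        congr with ω
        rw [norm_sub_sq_real, real_inner_comm]; ring
    _ = ∫ ω, ‖g ω - f ω‖ ^ 2 ∂μ + ∫ ω, ‖f ω‖ ^ 2 ∂μ := by
        rw [integral_sub (hvar.fun_add (hfg.const_mul 2)) (hsq hf2),
          integral_add hvar (hfg.const_mul 2), integral_const_mul, hcross]
        ring

theorem mul_integral_norm_sq_gradient_le_of_condExp [IsProbabilityMeasure μ]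
    {F : E → ℝ} {K : ℝ≥0} (hF : Differentiable ℝ F) (hK : LipschitzWith K (gradient F))
    (hm : m ≤ m₀) {x g : Ω → E} {η s c : ℝ} (hx : StronglyMeasurable[m] x) (hg : Integrable g μ)
    (hFx : Integrable (fun ω => F (x ω)) μ) (hFx' : Integrable (fun ω => F (x ω - η • g ω)) μ)
    (hvar_int : Integrable (fun ω => ‖g ω - gradient F (x ω)‖ ^ 2) μ)
    (hgrad_int : Integrable (fun ω => ‖gradient F (x ω)‖ ^ 2) μ)
    (hunbiased : μ[g | m] =ᵐ[μ] fun ω => gradient F (x ω))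
    (hvar : μ[fun ω => ‖g ω - gradient F (x ω)‖ ^ 2 | m]
      ≤ᵐ[μ] fun ω => s + c * ‖gradient F (x ω)‖ ^ 2)
    (hη : 0 ≤ η) (hηK : K * η * (1 + c) ≤ 1) :
    η * ∫ ω, ‖gradient F (x ω)‖ ^ 2 ∂μ
      ≤ 2 * (∫ ω, F (x ω) ∂μ - ∫ ω, F (x ω - η • g ω) ∂μ) + K * η ^ 2 * s := by
  set I := ∫ ω, ‖gradient F (x ω)‖ ^ 2 ∂μ
  have hgrad_m : StronglyMeasurable[m] fun ω => gradient F (x ω) :=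
    hK.continuous.comp_stronglyMeasurable hx
  have hgrad2 : MemLp (fun ω => gradient F (x ω)) 2 μ :=
    (memLp_two_iff_integrable_sq_norm (hgrad_m.mono hm).aestronglyMeasurable).2 hgrad_int
  have hg2 : MemLp g 2 μ := by
    have hdiff : MemLp (fun ω => g ω - gradient F (x ω)) 2 μ :=
      (memLp_two_iff_integrable_sq_norm (hg.1.sub hgrad2.1)).2 hvar_int
    convert hdiff.add hgrad2 using 1
    ext ω
    simp
  have hgsq : Integrable (fun ω => ‖g ω‖ ^ 2) μ :=
    (memLp_two_iff_integrable_sq_norm hg2.1).1 hg2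
  have hcross := hgrad2.integrable_inner hg2
  have hdescent : ∫ ω, F (x ω - η • g ω) ∂μ
      ≤ ∫ ω, F (x ω) ∂μ - η * I + K / 2 * η ^ 2 * ∫ ω, ‖g ω‖ ^ 2 ∂μ := by
    calc ∫ ω, F (x ω - η • g ω) ∂μ
        ≤ ∫ ω, (F (x ω) - η * ⟪gradient F (x ω), g ω⟫_ℝ + K / 2 * η ^ 2 * ‖g ω‖ ^ 2) ∂μ := by
          refine integral_mono hFx' ((hFx.sub (hcross.const_mul η)).add (hgsq.const_mul _))
            fun ω => ?_
          have := apply_add_le_of_lipschitzWith_gradient hF hK (x ω) (-(η • g ω))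
          rw [← sub_eq_add_neg, inner_neg_right, real_inner_smul_right, norm_neg, norm_smul,
            mul_pow, Real.norm_eq_abs, sq_abs] at this
          linarith
      _ = ∫ ω, F (x ω) ∂μ - η * I + K / 2 * η ^ 2 * ∫ ω, ‖g ω‖ ^ 2 ∂μ := by
          rw [integral_add (hFx.sub' (hcross.const_mul η)) (hgsq.const_mul _),
            integral_sub hFx (hcross.const_mul η), integral_const_mul, integral_const_mul,
            integral_inner_eq_integral_norm_sq_of_condExp_eq hm
              hgrad_m.aestronglyMeasurable hcross hg hunbiased]
  have hsplit := integral_norm_sq_eq_add_of_condExp_eq hm hgrad_m.aestronglyMeasurable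
    hgrad2 hg2 hg hunbiased
  have hvariance : ∫ ω, ‖g ω - gradient F (x ω)‖ ^ 2 ∂μ ≤ s + c * I := by
    refine (integral_le_integral_of_condExp_le hm
      ((integrable_const s).fun_add (hgrad_int.const_mul c)) hvar).trans_eq ?_
    rw [integral_add (integrable_const s) (hgrad_int.const_mul c), integral_const_mul]
    simp [I]
  have hI : 0 ≤ I := integral_nonneg fun ω => sq_nonneg _
  have habsorb : K * η * (1 + c) * (η * I) ≤ η * I :=
    mul_le_mul_of_nonneg_right hηK (mul_nonneg hη hI) |>.trans_eq (one_mul _)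
  have hnoise : K / 2 * η ^ 2 * ∫ ω, ‖g ω - gradient F (x ω)‖ ^ 2 ∂μ
      ≤ K / 2 * η ^ 2 * (s + c * I) := by gcongr
  rw [hsplit] at hdescent
  linarith

end ConditionalExpectation

theorem Finset.sum_Icc_le_sub_add_sum {α : Type*} [AddCommGroup α] [PartialOrder α]
    [IsOrderedAddMonoid α] {a c u : ℕ → α} {m n : ℕ} (hmn : m ≤ n)
    (h : ∀ q ∈ Finset.Icc m n, a q ≤ u q - u (q + 1) + c q) :
    ∑ q ∈ Finset.Icc m n, a q ≤ u m - u (n + 1) + ∑ q ∈ Finset.Icc m n, c q := by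
  calc ∑ q ∈ Finset.Icc m n, a q ≤ ∑ q ∈ Finset.Icc m n, (u q - u (q + 1) + c q) :=
        Finset.sum_le_sum h
    _ = u m - u (n + 1) + ∑ q ∈ Finset.Icc m n, c q := by
        have htele : ∑ q ∈ Finset.Icc m n, (u q - u (q + 1)) = u m - u (n + 1) := by
          rw [← neg_sub (u (n + 1)), ← Finset.sum_Icc_sub hmn, ← Finset.sum_neg_distrib]
          simp only [neg_sub]
        rw [Finset.sum_add_distrib, htele]

theorem mul_mul_one_add_div_le_one {L ηl M b B : ℝ} (hL : 0 ≤ L) (hb : 0 < b) (hbB : b ≤ B)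
    (hηl : 0 < ηl ∧ ηl ≤ 1 / (L * (M / B + 1))) :
    L * (ηl * b / B) * (1 + M / b) ≤ 1 := by
  have hB : 0 < B := hb.trans_le hbB
  have hc : 0 < L * (M / B + 1) := one_div_pos.mp (hηl.1.trans_le hηl.2)
  calc L * (ηl * b / B) * (1 + M / b) = L * ηl * (b + M) / B := by field_simp
    _ ≤ L * ηl * (B + M) / B := by gcongr; exact mul_nonneg hL hηl.1.le
    _ = ηl * (L * (M / B + 1)) := by field_simp; ring
    _ ≤ 1 := (le_div_iff₀ hc).1 hηl.2

theorem sgd_lr_norm_convergence_general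
    {Ω : Type*} [MeasurableSpace Ω] (μ : Measure Ω) [IsProbabilityMeasure μ]
    (d : ℕ) (F : EuclideanSpace ℝ (Fin d) → ℝ) (L : ℝ) (hL : 0 < L)
    (hFdiff : Differentiable ℝ F)
    (hFlip : LipschitzWith L.toNNReal (fun x => gradient F x))
    (Fstar : ℝ) (hbdd : BddBelow (Set.range F)) (hFstar : Fstar = ⨅ x, F x)
    (B : ℕ) (ηl : ℝ) (σl M : ℝ)
    (hηl : 0 < ηl ∧ ηl ≤ 1 / (L * (M / B + 1)))
    (Q : ℕ) (hQ : 1 ≤ Q)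
    (b : ℕ → ℕ) (hb : ∀ q, 1 ≤ b q ∧ b q ≤ B)
    (η : ℕ → ℝ) (hηdef : ∀ q, η q = ηl * (b q : ℝ) / B)
    (A : ℝ) (hA : A = ∑ q ∈ Finset.Icc 1 Q, η q)
    (y : ℕ → Ω → EuclideanSpace ℝ (Fin d)) (y1 : EuclideanSpace ℝ (Fin d))
    (g : ℕ → Ω → EuclideanSpace ℝ (Fin d))
    (hymeas : ∀ q, Measurable (y q))
    (hgint : ∀ q, Integrable (g q) μ)
    (hgsqint : ∀ q, Integrable (fun ω => ‖g q ω - gradient F (y q ω)‖ ^ 2) μ)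
    (hFyint : ∀ q, Integrable (fun ω => F (y q ω)) μ)
    (hgradsqint : ∀ q, Integrable (fun ω => ‖gradient F (y q ω)‖ ^ 2) μ)
    (hy1 : ∀ ω, y 1 ω = y1)
    (hrec : ∀ q, 1 ≤ q → q ≤ Q → ∀ ω, y (q + 1) ω = y q ω - η q • g q ω)
    (hunbiased : ∀ q, 1 ≤ q → q ≤ Q →
      μ[g q | MeasurableSpace.comap (y q) inferInstance]
        =ᵐ[μ] fun ω => gradient F (y q ω))
    (hvar : ∀ q, 1 ≤ q → q ≤ Q →
      μ[(fun ω => ‖g q ω - gradient F (y q ω)‖ ^ 2) |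
          MeasurableSpace.comap (y q) inferInstance]
        ≤ᵐ[μ] fun ω => σl ^ 2 / b q + (M / b q) * ‖gradient F (y q ω)‖ ^ 2) :
    (1 / A) * ∑ q ∈ Finset.Icc 1 Q, η q * (∫ ω, ‖gradient F (y q ω)‖ ^ 2 ∂μ)
      ≤ 2 * (F y1 - Fstar) / A + ηl * L * σl ^ 2 / B := by
  have hb_pos : ∀ q, (0 : ℝ) < b q := fun q => by exact_mod_cast (hb q).1
  have hbB : ∀ q, (b q : ℝ) ≤ B := fun q => by exact_mod_cast (hb q).2
  have hη_pos : ∀ q, 0 < η q := fun q =>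
    hηdef q ▸ div_pos (mul_pos hηl.1 (hb_pos q)) ((hb_pos q).trans_le (hbB q))
  have hLK : (L.toNNReal : ℝ) = L := Real.coe_toNNReal L hL.le
  set E : ℕ → ℝ := fun q => ∫ ω, F (y q ω) ∂μ
  have hstep : ∀ q ∈ Finset.Icc 1 Q, η q * ∫ ω, ‖gradient F (y q ω)‖ ^ 2 ∂μ
      ≤ 2 * E q - 2 * E (q + 1) + η q * (ηl * L * σl ^ 2 / B) := by
    intro q hq
    obtain ⟨hq1, hqQ⟩ := Finset.mem_Icc.mp hq
    have hy : y (q + 1) = fun ω => y q ω - η q • g q ω := funext (hrec q hq1 hqQ)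
    have hnoise : L * η q ^ 2 * (σl ^ 2 / b q) = η q * (ηl * L * σl ^ 2 / B) := by
      rw [hηdef]; have := hb_pos q; field_simp
    have := mul_integral_norm_sq_gradient_le_of_condExp hFdiff hFlip (hymeas q).comap_le
      (comap_measurable (y q)).stronglyMeasurable (hgint q) (hFyint q)
      (by simpa only [hy] using hFyint (q + 1)) (hgsqint q) (hgradsqint q) (hunbiased q hq1 hqQ)
      (hvar q hq1 hqQ) (hη_pos q).le
      (by rw [hLK, hηdef]; exact mul_mul_one_add_div_le_one hL.le (hb_pos q) (hbB q) hηl)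
    rw [hLK, hnoise] at this
    simp only [E, hy]
    linarith
  have hsum := Finset.sum_Icc_le_sub_add_sum (u := fun q => 2 * E q) hQ hstep
  rw [← Finset.sum_mul, ← hA] at hsum
  have hE1 : E 1 = F y1 := by simp [E, hy1]
  have hEQ : Fstar ≤ E (Q + 1) := by
    simpa using integral_mono (integrable_const Fstar) (hFyint (Q + 1))
      fun ω => hFstar ▸ ciInf_le hbdd (y (Q + 1) ω)
  have hA_pos : 0 < A := hA ▸ Finset.sum_pos (fun q _ => hη_pos q) ⟨1, by simp [hQ]⟩
  rw [one_div_mul_eq_div, div_le_iff₀ hA_pos, add_mul, div_mul_cancel₀ _ hA_pos.ne']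
  linarith

/-- **SGD with non-uniform batch sizes and learning-rate normalization.**
With iterates `y_{q+1} = y_q − η_q g_q^{(b_q)}`, per-step learning rate `η_q = ηℓ b_q / B`,
`A_Q = ∑_{q=1}^Q η_q`, unbiased mini-batch gradients with weak-growth variance bound
`σℓ²/b_q + (M/b_q)‖∇F(y_q)‖²` conditionally on `y_q`, and
`0 < ηℓ ≤ 1/(L(M/B + 1))`, one has
`(1/A_Q) ∑_{q=1}^Q η_q E[‖∇F(y_q)‖²] ≤ 2(F(y₁) − F*)/A_Q + ηℓ L σℓ² / B`. -/
theorem sgd_lr_norm_convergence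
    {Ω : Type*} [MeasurableSpace Ω] (μ : Measure Ω) [IsProbabilityMeasure μ]
    (d : ℕ) (F : EuclideanSpace ℝ (Fin d) → ℝ) (L : ℝ) (hL : 0 < L)
    (hFdiff : Differentiable ℝ F)
    (hFlip : LipschitzWith L.toNNReal (fun x => gradient F x))
    (Fstar : ℝ) (hbdd : BddBelow (Set.range F)) (hFstar : Fstar = ⨅ x, F x)
    (B : ℕ) (hB : 1 ≤ B) (ηl : ℝ) (σl M : ℝ) (hσl : 0 ≤ σl ^ 2) (hM : 0 ≤ M)
    (hηl : 0 < ηl ∧ ηl ≤ 1 / (L * (M / B + 1)))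
    (Q : ℕ) (hQ : 1 ≤ Q)
    (b : ℕ → ℕ) (hb : ∀ q, 1 ≤ b q ∧ b q ≤ B)
    (η : ℕ → ℝ) (hηdef : ∀ q, η q = ηl * (b q : ℝ) / B)
    (A : ℝ) (hA : A = ∑ q ∈ Finset.Icc 1 Q, η q)
    (y : ℕ → Ω → EuclideanSpace ℝ (Fin d)) (y1 : EuclideanSpace ℝ (Fin d))
    (g : ℕ → Ω → EuclideanSpace ℝ (Fin d))
    (hymeas : ∀ q, Measurable (y q)) (hgmeas : ∀ q, Measurable (g q))
    (hgint : ∀ q, Integrable (g q) μ)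
    (hgsqint : ∀ q, Integrable (fun ω => ‖g q ω - gradient F (y q ω)‖ ^ 2) μ)
    (hFyint : ∀ q, Integrable (fun ω => F (y q ω)) μ)
    (hgradsqint : ∀ q, Integrable (fun ω => ‖gradient F (y q ω)‖ ^ 2) μ)
    (hy1 : ∀ ω, y 1 ω = y1)
    (hrec : ∀ q, 1 ≤ q → q ≤ Q → ∀ ω, y (q + 1) ω = y q ω - η q • g q ω)
    (hunbiased : ∀ q, 1 ≤ q → q ≤ Q →
      μ[g q | MeasurableSpace.comap (y q) inferInstance]
        =ᵐ[μ] fun ω => gradient F (y q ω))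
    (hvar : ∀ q, 1 ≤ q → q ≤ Q →
      μ[(fun ω => ‖g q ω - gradient F (y q ω)‖ ^ 2) |
          MeasurableSpace.comap (y q) inferInstance]
        ≤ᵐ[μ] fun ω => σl ^ 2 / b q + (M / b q) * ‖gradient F (y q ω)‖ ^ 2) :
    (1 / A) * ∑ q ∈ Finset.Icc 1 Q, η q * (∫ ω, ‖gradient F (y q ω)‖ ^ 2 ∂μ)
      ≤ 2 * (F y1 - Fstar) / A + ηl * L * σl ^ 2 / B :=
  sgd_lr_norm_convergence_general μ d F L hL hFdiff hFlip Fstar hbdd hFstar B ηl σl M hηl Q hQ b hb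
    η hηdef A hA y y1 g hymeas hgint hgsqint hFyint hgradsqint hy1 hrec hunbiased hvar
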